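/- arXiv:2006.16602 — 3 statements merged into one kernel-verified Lean document; each statement's English description precedes it below -/
import Mathlib

section
/- Let M be a metric space, f : M → M a homeomorphism, and (K, j, h) a weak Denjoy sub-system for f. Let a, b ∈ K be the two endpoints of a connected component of 𝕋 \ K, and set x₁ = j(a), x₀ = j(b), so that {x₁, x₀} is a gap of (K, j, h). Then for every ε > 0 there exists δ > 0 such that for every weak Denjoy sub-system (K₁, j₁, h₁) for f satisfying: the Hausdorff distance between j₁(K₁) and j(K) is less than δ, and the Hausdorff distance (in M³ with the sup-product metric) between G(K₁, j₁) and G(K, j) is less than δ or between G(K₁, j₁)⁻ and G(K, j) is less than δ, there exists a gap {z₁, z₀} of (K₁, j₁, h₁) with dist(z₁, x₁) < ε and dist(z₀, x₀) < ε. -/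
open Filter Topology Set

noncomputable section

/-- A Denjoy example: an orientation-preserving circle homeomorphism with
irrational rotation number together with its minimal invariant Cantor set. -/
structure DenjoySystem where
  /-- the circle homeomorphism -/
  h : UnitAddCircle ≃ₜ UnitAddCircle
  /-- the minimal set -/
  K : Set UnitAddCircle
  /-- a lift of `h` to `ℝ` -/
  lift : ℝ → ℝ
  lift_mono : StrictMono lift
  lift_cont : Continuous lift
  lift_bij : Function.Bijective lift
  lift_add : ∀ x : ℝ, lift (x + 1) = lift x + 1
  lift_proj : ∀ x : ℝ, ((lift x : ℝ) : UnitAddCircle) = h (x : UnitAddCircle)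
  /-- a representative of the rotation number -/
  rot : ℝ
  rot_lim : Filter.Tendsto (fun n : ℕ => lift^[n] 0 / (n : ℝ)) Filter.atTop (nhds rot)
  rot_irr : Irrational rot
  K_ne : K.Nonempty
  K_cpt : IsCompact K
  K_proper : K ≠ Set.univ
  K_inv : h '' K = K
  K_perf : Perfect K
  K_td : IsTotallyDisconnected K
  K_min : ∀ x ∈ K, ∀ y ∈ K, y ∈ closure {z | ∃ n : ℤ, (h.toEquiv ^ n) x = z}

/-- A weak Denjoy sub-system (WDS) for a map `f : M → M`. -/
structure WDS (M : Type*) [TopologicalSpace M] (f : M → M) extends DenjoySystem where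
  /-- the embedding of the minimal set into `M` -/
  j : K → M
  j_emb : Topology.IsEmbedding j
  range_inv : f '' Set.range j = Set.range j
  equivar : ∀ x y : K, h (x : UnitAddCircle) = (y : UnitAddCircle) → j y = f (j x)

/-- Weak cyclic order on the circle. -/
def CircBtw (a b c : UnitAddCircle) : Prop :=
  ∃ x y z : ℝ, (x : UnitAddCircle) = a ∧ (y : UnitAddCircle) = b ∧ (z : UnitAddCircle) = c ∧
    x ≤ y ∧ y ≤ z ∧ z ≤ x + 1

/-- The order graph of a WDS. -/
def WDS.orderGraph {M : Type*} [TopologicalSpace M] {f : M → M} (W : WDS M f) :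
    Set (M × M × M) :=
  {p | ∃ a b c : W.K, CircBtw (a : UnitAddCircle) (b : UnitAddCircle) (c : UnitAddCircle) ∧ p = (W.j a, W.j b, W.j c)}

/-- The reverse of the order graph of a WDS. -/
def WDS.revGraph {M : Type*} [TopologicalSpace M] {f : M → M} (W : WDS M f) :
    Set (M × M × M) :=
  {p | (p.2.2, p.2.1, p.1) ∈ W.orderGraph}

/-!
Lift the gap `{a, b}` to an interval `(u, v)` of `ℝ` with `u < v < u + 1` whose image in the
circle misses `K`. Since `j` is an embedding, points of `K` whose images are close to `j u` and
`j v` lie close to `u` and `v` on the circle, and every point of `K` cyclically between two such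
points then lies near `u` or near `v`. For a nearby WDS `(K₁, j₁, h₁)` pick `α, β ∈ K₁` with
`j₁ α` close to `j u` and `j₁ β` close to `j v`; closeness of the order graphs (or of the reversed
graph, with `α` and `β` exchanged) forces every point of `K₁` on the arc from `α` to `β` to be
mapped close to `j u` or to `j v`. These two pieces of the arc are disjoint and closed, so between
the last point of the first piece and the next point of the second there is a gap of `K₁`.
-/

open Metric

lemma IsPreconnected.subset_of_disjoint_frontier {X : Type*} [TopologicalSpace X] {s t : Set X}
    (hs : IsPreconnected s) (ht : IsOpen t) (hst : (s ∩ t).Nonempty)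
    (hfr : Disjoint s (frontier t)) : s ⊆ t := by
  refine hs.subset_left_of_subset_union ht isClosed_closure.isOpen_compl
    (disjoint_compl_right.mono_left subset_closure) (fun x hx => ?_) hst
  by_cases hxt : x ∈ t
  · exact Or.inl hxt
  · exact Or.inr fun hcl => hfr.ne_of_mem hx ⟨hcl, by rwa [ht.interior_eq]⟩ rfl

section ConditionallyCompleteLinearOrder

variable {α : Type*} [ConditionallyCompleteLinearOrder α] [TopologicalSpace α] [OrderTopology α]
  {S T : Set α} {l r : α}

lemma IsClosed.exists_Ioo_subset_compl (hS : IsClosed S) {x : α} (hx : x ∉ S)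
    (hl : l ∈ S) (hr : r ∈ S) (hlx : l ≤ x) (hxr : x ≤ r) :
    ∃ u ∈ S, ∃ v ∈ S, l ≤ u ∧ v ≤ r ∧ x ∈ Ioo u v ∧ Ioo u v ⊆ Sᶜ := by
  have hbelow : BddAbove (S ∩ Iic x) := ⟨x, fun _ h => h.2⟩
  have habove : BddBelow (S ∩ Ici x) := ⟨x, fun _ h => h.2⟩
  obtain ⟨huS, hux⟩ := (hS.inter isClosed_Iic).csSup_mem ⟨l, hl, hlx⟩ hbelow
  obtain ⟨hvS, hxv⟩ := (hS.inter isClosed_Ici).csInf_mem ⟨r, hr, hxr⟩ habove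
  refine ⟨_, huS, _, hvS, le_csSup hbelow ⟨hl, hlx⟩, csInf_le habove ⟨hr, hxr⟩,
    ⟨hux.lt_of_ne (ne_of_mem_of_not_mem huS hx), hxv.lt_of_ne' (ne_of_mem_of_not_mem hvS hx)⟩,
    fun t ht htS => ?_⟩
  rcases le_total t x with htx | hxt
  · exact (le_csSup hbelow ⟨htS, htx⟩).not_gt ht.1
  · exact (csInf_le habove ⟨htS, hxt⟩).not_gt ht.2

lemma IsClosed.exists_Ioo_subset_compl_union (hS : IsClosed S) (hT : IsClosed T)
    (hST : Disjoint S T) (hl : l ∈ S) (hr : r ∈ T) (hlr : l ≤ r) :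
    ∃ u ∈ S, ∃ v ∈ T, l ≤ u ∧ u < v ∧ v ≤ r ∧ Ioo u v ⊆ (S ∪ T)ᶜ := by
  have hbelow : BddAbove (S ∩ Iic r) := ⟨r, fun _ h => h.2⟩
  obtain ⟨huS, hur⟩ := (hS.inter isClosed_Iic).csSup_mem ⟨l, hl, hlr⟩ hbelow
  set u := sSup (S ∩ Iic r)
  have habove : BddBelow (T ∩ Ici u) := ⟨u, fun _ h => h.2⟩
  obtain ⟨hvT, huv⟩ := (hT.inter isClosed_Ici).csInf_mem ⟨r, hr, hur⟩ habove
  have hvr : sInf (T ∩ Ici u) ≤ r := csInf_le habove ⟨hr, hur⟩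
  refine ⟨u, huS, _, hvT, le_csSup hbelow ⟨hl, hlr⟩, huv.lt_of_ne (hST.ne_of_mem huS hvT), hvr,
    fun t ht htST => ?_⟩
  rcases htST with htS | htT
  · exact (le_csSup hbelow ⟨htS, ht.2.le.trans hvr⟩).not_gt ht.1
  · exact (csInf_le habove ⟨htT, ht.1.le⟩).not_gt ht.2

end ConditionallyCompleteLinearOrder

namespace UnitAddCircle

lemma coe_eq_coe_iff_exists_int {x y : ℝ} :
    (x : UnitAddCircle) = y ↔ ∃ n : ℤ, y = x + n := by
  rw [QuotientAddGroup.eq, AddSubgroup.mem_zmultiples_iff]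
  refine exists_congr fun n => ?_
  rw [zsmul_one]
  constructor <;> intro h <;> linarith

lemma exists_coe_eq_mem_Ico (z : UnitAddCircle) (s : ℝ) :
    ∃ t ∈ Ico s (s + 1), (t : UnitAddCircle) = z :=
  ⟨AddCircle.equivIco 1 s z, (AddCircle.equivIco 1 s z).2, AddCircle.coe_equivIco⟩

lemma eq_of_coe_eq_coe {x y : ℝ} (h : (x : UnitAddCircle) = y) (hxy : |x - y| < 1) : x = y := by
  obtain ⟨n, rfl⟩ := coe_eq_coe_iff_exists_int.1 h
  have hn : |(n : ℝ)| < 1 := by simpa using hxy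
  rw [← Int.cast_abs, ← Int.cast_one, Int.cast_lt] at hn
  simp [Int.abs_lt_one_iff.1 hn]

def arc (u v : ℝ) : Set UnitAddCircle := (↑) '' Ioo u v

lemma coe_mem_arc {t u v : ℝ} (ht : t ∈ Ioo u v) : (t : UnitAddCircle) ∈ arc u v :=
  mem_image_of_mem _ ht

lemma arc_subset_arc {u v u' v' : ℝ} (hu : u' ≤ u) (hv : v ≤ v') : arc u v ⊆ arc u' v' :=
  image_mono (Ioo_subset_Ioo hu hv)

lemma isOpen_arc (u v : ℝ) : IsOpen (arc u v) :=
  QuotientAddGroup.isOpenMap_coe _ isOpen_Ioo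

lemma isPreconnected_arc (u v : ℝ) : IsPreconnected (arc u v) :=
  isPreconnected_Ioo.image _ (AddCircle.continuous_mk' 1).continuousOn

lemma coe_notMem_arc {t u v : ℝ} (ht : t ∉ Ioo u v) (hvt : v - 1 ≤ t) (htu : t ≤ u + 1) :
    (t : UnitAddCircle) ∉ arc u v := by
  rintro ⟨s, hs, hst⟩
  rw [eq_of_coe_eq_coe hst (abs_sub_lt_iff.2 ⟨by linarith [hs.2], by linarith [hs.1]⟩)] at hs
  exact ht hs

lemma frontier_arc {u v : ℝ} (huv : u < v) (hvu : v < u + 1) :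
    frontier (arc u v) = {(u : UnitAddCircle), (v : UnitAddCircle)} := by
  have hclosure : closure (arc u v) = (↑) '' Icc u v := by
    refine (closure_minimal (image_mono Ioo_subset_Icc_self)
      (isCompact_Icc.image (AddCircle.continuous_mk' 1)).isClosed).antisymm ?_
    rw [← closure_Ioo huv.ne]
    exact image_closure_subset_closure_image (AddCircle.continuous_mk' 1)
  rw [frontier, hclosure, (isOpen_arc u v).interior_eq]
  ext z
  constructor
  · rintro ⟨⟨t, ht, rfl⟩, hz⟩
    rcases ht.1.eq_or_lt with rfl | htu
    · exact mem_insert _ _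
    rcases ht.2.eq_or_lt with rfl | htv
    · exact mem_insert_of_mem _ rfl
    · exact absurd (coe_mem_arc ⟨htu, htv⟩) hz
  · rintro (rfl | rfl)
    · exact ⟨mem_image_of_mem _ ⟨le_rfl, huv.le⟩,
        coe_notMem_arc (fun h => h.1.false) (by linarith) (by linarith)⟩
    · exact ⟨mem_image_of_mem _ ⟨huv.le, le_rfl⟩,
        coe_notMem_arc (fun h => h.2.false) (by linarith) (by linarith)⟩

variable {K : Set UnitAddCircle} {a b : UnitAddCircle}

lemma connectedComponentIn_compl_eq_arc {u v : ℝ} (huv : u < v) (hvu : v < u + 1)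
    (hu : (u : UnitAddCircle) ∈ K) (hv : (v : UnitAddCircle) ∈ K) (hK : arc u v ⊆ Kᶜ)
    {x : UnitAddCircle} (hx : x ∈ arc u v) : connectedComponentIn Kᶜ x = arc u v := by
  refine (isPreconnected_connectedComponentIn.subset_of_disjoint_frontier (isOpen_arc u v)
    ⟨x, mem_connectedComponentIn (hK hx), hx⟩ ?_).antisymm
    ((isPreconnected_arc u v).subset_connectedComponentIn hx hK)
  rw [frontier_arc huv hvu]
  exact (disjoint_compl_left_iff_subset.2 (insert_subset hu (singleton_subset_iff.2 hv))).mono_left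
    (connectedComponentIn_subset _ _)

lemma exists_arc_subset_compl (hK : IsClosed K) (hKnt : K.Nontrivial) {x : UnitAddCircle}
    (hx : x ∉ K) : ∃ u v : ℝ, u < v ∧ v < u + 1 ∧ (u : UnitAddCircle) ∈ K ∧
      (v : UnitAddCircle) ∈ K ∧ x ∈ arc u v ∧ arc u v ⊆ Kᶜ := by
  obtain ⟨xt, -, rfl⟩ := exists_coe_eq_mem_Ico x 0
  obtain ⟨k, hk⟩ := hKnt.nonempty
  obtain ⟨kt, hkt, rfl⟩ := exists_coe_eq_mem_Ico k (xt - 1)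
  have hkt' : ((kt + 1 : ℝ) : UnitAddCircle) ∈ K := by rwa [AddCircle.coe_add_period]
  obtain ⟨u, hu, v, hv, hktu, hvkt, hxuv, hS⟩ := (hK.preimage (AddCircle.continuous_mk' 1))
    |>.exists_Ioo_subset_compl hx hk hkt' (by linarith [hkt.2]) (by linarith [hkt.1])
  have harc : arc u v ⊆ Kᶜ := by
    rintro _ ⟨t, ht, rfl⟩
    exact hS ht
  refine ⟨u, v, hxuv.1.trans hxuv.2, ?_, hu, hv, coe_mem_arc hxuv, harc⟩
  refine lt_of_le_of_ne (by linarith) fun hvu => hKnt.not_subsingleton fun y hy z hz => ?_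
  -- if the arc is a full turn, `K` is the single point `↑u`
  have hpt : ∀ w ∈ K, w = (u : UnitAddCircle) := by
    intro w hw
    obtain ⟨wt, hwt, rfl⟩ := exists_coe_eq_mem_Ico w u
    rcases hwt.1.eq_or_lt with rfl | huw
    · rfl
    · exact absurd hw (harc (coe_mem_arc ⟨huw, hvu ▸ hwt.2⟩))
  rw [hpt y hy, hpt z hz]

def IsGap (K : Set UnitAddCircle) (a b : UnitAddCircle) : Prop :=
  ∃ I : Set UnitAddCircle, (∃ x ∈ Kᶜ, I = connectedComponentIn Kᶜ x) ∧ a ≠ b ∧ frontier I = {a, b}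

lemma IsGap.symm (h : IsGap K a b) : IsGap K b a :=
  let ⟨I, hI, hab, hfr⟩ := h
  ⟨I, hI, hab.symm, by rw [hfr, pair_comm]⟩

/-- For `a b ∈ K`, this says that the arc running counterclockwise from `a` to `b` is a gap. -/
def IsArcGap (K : Set UnitAddCircle) (a b : UnitAddCircle) : Prop :=
  ∃ u v : ℝ, (u : UnitAddCircle) = a ∧ (v : UnitAddCircle) = b ∧ u < v ∧ v < u + 1 ∧ arc u v ⊆ Kᶜ

lemma IsArcGap.ne (h : IsArcGap K a b) : a ≠ b := by
  obtain ⟨u, v, rfl, rfl, huv, hvu, -⟩ := h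
  exact fun h => huv.ne (eq_of_coe_eq_coe h (abs_sub_lt_iff.2 ⟨by linarith, by linarith⟩))

lemma IsArcGap.isGap (h : IsArcGap K a b) (ha : a ∈ K) (hb : b ∈ K) : IsGap K a b := by
  have hab := h.ne
  obtain ⟨u, v, rfl, rfl, huv, hvu, hK⟩ := h
  have hmid : (((u + v) / 2 : ℝ) : UnitAddCircle) ∈ arc u v :=
    coe_mem_arc ⟨by linarith, by linarith⟩
  exact ⟨arc u v, ⟨_, hK hmid, (connectedComponentIn_compl_eq_arc huv hvu ha hb hK hmid).symm⟩,
    hab, frontier_arc huv hvu⟩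

lemma IsGap.isArcGap_or_isArcGap (hK : IsClosed K) (ha : a ∈ K) (hb : b ∈ K) (h : IsGap K a b) :
    IsArcGap K a b ∨ IsArcGap K b a := by
  obtain ⟨_, ⟨x, hx, rfl⟩, hab, hfr⟩ := h
  obtain ⟨u, v, huv, hvu, hu, hv, hxuv, hK⟩ :=
    exists_arc_subset_compl hK ⟨a, ha, b, hb, hab⟩ hx
  rw [connectedComponentIn_compl_eq_arc huv hvu hu hv hK hxuv, frontier_arc huv hvu,
    pair_eq_pair_iff] at hfr
  rcases hfr with ⟨rfl, rfl⟩ | ⟨rfl, rfl⟩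
  · exact Or.inl ⟨u, v, rfl, rfl, huv, hvu, hK⟩
  · exact Or.inr ⟨u, v, rfl, rfl, huv, hvu, hK⟩

lemma _root_.CircBtw.exists_lift {c : UnitAddCircle} (h : CircBtw a c b) {s : ℝ}
    (hs : (s : UnitAddCircle) = a) :
    ∃ y z : ℝ, (y : UnitAddCircle) = c ∧ (z : UnitAddCircle) = b ∧ s ≤ y ∧ y ≤ z ∧ z ≤ s + 1 := by
  obtain ⟨x, y, z, rfl, rfl, rfl, hxy, hyz, hzx⟩ := h
  obtain ⟨n, rfl⟩ := coe_eq_coe_iff_exists_int.1 hs.symm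
  refine ⟨y + n, z + n, ?_, ?_, by linarith, by linarith, by linarith⟩ <;>
    exact (coe_eq_coe_iff_exists_int.2 ⟨n, rfl⟩).symm

lemma _root_.CircBtw.mem_arc_or_mem_arc {u v η : ℝ} (huv : η ≤ v - u) (hvu : 2 * η < u + 1 - v)
    (hK : arc u v ⊆ Kᶜ) {c : UnitAddCircle} (ha : a ∈ K) (hc : c ∈ K) (hb : b ∈ K)
    (hau : a ∈ arc (u - η) (u + η)) (hbv : b ∈ arc (v - η) (v + η)) (h : CircBtw a c b) :
    c ∈ arc (u - η) (u + η) ∪ arc (v - η) (v + η) := by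
  obtain ⟨s, hs, rfl⟩ := hau
  obtain ⟨t, ht, rfl⟩ := hbv
  have hsu : s ≤ u := not_lt.1 fun hus => hK (coe_mem_arc ⟨hus, by linarith [hs.2]⟩) ha
  have hvt : v ≤ t := not_lt.1 fun htv => hK (coe_mem_arc ⟨by linarith [ht.1], htv⟩) hb
  obtain ⟨y, z, rfl, hzt, hsy, hyz, hzs⟩ := h.exists_lift rfl
  obtain rfl : z = t := eq_of_coe_eq_coe hzt
    (abs_sub_lt_iff.2 ⟨by linarith [hs.1, hs.2], by linarith [hs.1, ht.2]⟩)
  rcases le_or_gt y u with hyu | hyu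
  · exact Or.inl (coe_mem_arc ⟨by linarith [hs.1], by linarith [hs.1, hs.2]⟩)
  · have hvy : v ≤ y := not_lt.1 fun hyv => hK (coe_mem_arc ⟨hyu, hyv⟩) hc
    exact Or.inr (coe_mem_arc ⟨by linarith [ht.1, ht.2], by linarith [ht.2]⟩)

lemma exists_arc_subset_of_mem_nhds {N : Set UnitAddCircle} {w : ℝ}
    (hN : N ∈ 𝓝 (w : UnitAddCircle)) : ∃ η > 0, arc (w - η) (w + η) ⊆ N := by
  obtain ⟨η, hη, hball⟩ := Metric.mem_nhds_iff.1
    ((AddCircle.continuous_mk' 1).continuousAt.preimage_mem_nhds hN)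
  refine ⟨η, hη, ?_⟩
  rintro _ ⟨t, ht, rfl⟩
  exact hball (by rwa [Real.ball_eq_Ioo])

variable {M : Type*} [MetricSpace M] {j : K → M}

lemma exists_dist_lt_of_mem_arc (hj : Continuous j) {w : ℝ} (hw : (w : UnitAddCircle) ∈ K)
    {ε : ℝ} (hε : 0 < ε) :
    ∃ η > 0, ∀ c : K, (c : UnitAddCircle) ∈ arc (w - η) (w + η) → dist (j c) (j ⟨w, hw⟩) < ε := by
  obtain ⟨N, hN, hNj⟩ := (mem_nhds_subtype K ⟨w, hw⟩ _).1
    (hj.continuousAt.preimage_mem_nhds (Metric.ball_mem_nhds _ hε))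
  obtain ⟨η, hη, harc⟩ := exists_arc_subset_of_mem_nhds hN
  exact ⟨η, hη, fun c hc => hNj (harc hc)⟩

lemma exists_mem_arc_of_dist_lt (hj : IsEmbedding j) {w : ℝ} (hw : (w : UnitAddCircle) ∈ K)
    {η : ℝ} (hη : 0 < η) :
    ∃ δ > 0, ∀ c : K, dist (j c) (j ⟨w, hw⟩) < δ → (c : UnitAddCircle) ∈ arc (w - η) (w + η) := by
  have harc : Subtype.val ⁻¹' arc (w - η) (w + η) ∈ 𝓝 (⟨w, hw⟩ : K) :=
    continuous_subtype_val.continuousAt.preimage_mem_nhds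
      ((isOpen_arc _ _).mem_nhds (coe_mem_arc ⟨by linarith, by linarith⟩))
  rw [hj.nhds_eq_comap] at harc
  obtain ⟨δ, hδ, hsub⟩ := (Metric.nhds_basis_ball.comap j).mem_iff.1 harc
  exact ⟨δ, hδ, fun c hc => hsub hc⟩

lemma IsArcGap.exists_dist_lt_of_circBtw (hj : IsEmbedding j) {p q : K} (hpq : IsArcGap K p q)
    {ε : ℝ} (hε : 0 < ε) :
    ∃ δ > 0, ∀ a c b : K, CircBtw a c b → dist (j a) (j p) < δ → dist (j b) (j q) < δ →
      dist (j c) (j p) < ε ∨ dist (j c) (j q) < ε := by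
  obtain ⟨_, hp⟩ := p
  obtain ⟨_, hq⟩ := q
  obtain ⟨u, v, rfl, rfl, huv, hvu, hK⟩ := hpq
  obtain ⟨ηu, hηu, hu⟩ := exists_dist_lt_of_mem_arc hj.continuous hp hε
  obtain ⟨ηv, hηv, hv⟩ := exists_dist_lt_of_mem_arc hj.continuous hq hε
  set η := min (min ηu ηv) (min (v - u) ((u + 1 - v) / 3))
  have hη : 0 < η := lt_min (lt_min hηu hηv) (lt_min (by linarith) (by linarith))
  have hηu' : η ≤ ηu := (min_le_left _ _).trans (min_le_left _ _)
  have hηv' : η ≤ ηv := (min_le_left _ _).trans (min_le_right _ _)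
  have hηvu : η ≤ v - u := (min_le_right _ _).trans (min_le_left _ _)
  have hηuv : η ≤ (u + 1 - v) / 3 := (min_le_right _ _).trans (min_le_right _ _)
  obtain ⟨δu, hδu, hau⟩ := exists_mem_arc_of_dist_lt hj hp hη
  obtain ⟨δv, hδv, hbv⟩ := exists_mem_arc_of_dist_lt hj hq hη
  refine ⟨min δu δv, lt_min hδu hδv, fun a c b hacb ha hb => ?_⟩
  rcases hacb.mem_arc_or_mem_arc hηvu (by linarith) hK a.2 c.2 b.2
    (hau a (ha.trans_le (min_le_left _ _))) (hbv b (hb.trans_le (min_le_right _ _))) with hc | hc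
  · exact Or.inl (hu c (arc_subset_arc (by linarith) (by linarith) hc))
  · exact Or.inr (hv c (arc_subset_arc (by linarith) (by linarith) hc))

lemma circBtw_self (a : UnitAddCircle) : CircBtw a a a := by
  obtain ⟨t, -, rfl⟩ := exists_coe_eq_mem_Ico a 0
  exact ⟨t, t, t, rfl, rfl, rfl, le_rfl, le_rfl, by linarith⟩

lemma exists_isArcGap_of_circBtw_subset {P Q : Set UnitAddCircle} (hP : IsClosed P)
    (hQ : IsClosed Q) (hPQ : Disjoint P Q) (ha : a ∈ P) (hb : b ∈ Q)
    (hcover : ∀ c ∈ K, CircBtw a c b → c ∈ P ∪ Q) : ∃ a' ∈ P, ∃ b' ∈ Q, IsArcGap K a' b' := by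
  obtain ⟨l, -, rfl⟩ := exists_coe_eq_mem_Ico a 0
  obtain ⟨r, hr, rfl⟩ := exists_coe_eq_mem_Ico b l
  have hcont := AddCircle.continuous_mk' (1 : ℝ)
  obtain ⟨u, hu, v, hv, hlu, huv, hvr, hfree⟩ := (hP.preimage hcont).exists_Ioo_subset_compl_union
    (hQ.preimage hcont) (hPQ.preimage _) ha hb hr.1
  refine ⟨u, hu, v, hv, u, v, rfl, rfl, huv, by linarith [hr.2], ?_⟩
  rintro _ ⟨t, ht, rfl⟩ htK
  exact hfree ht (hcover _ htK
    ⟨l, t, r, rfl, rfl, rfl, by linarith [ht.1], by linarith [ht.2], by linarith [hr.2]⟩)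

lemma exists_isGap_dist_le (hK : IsCompact K) (hj : Continuous j) {x y : M} {ε : ℝ}
    (hxy : 2 * ε < dist x y) {a b : K} (ha : dist (j a) x ≤ ε) (hb : dist (j b) y ≤ ε)
    (hcover : ∀ c : K, CircBtw a c b → dist (j c) x ≤ ε ∨ dist (j c) y ≤ ε) :
    ∃ a' b' : K, IsGap K a' b' ∧ dist (j a') x ≤ ε ∧ dist (j b') y ≤ ε := by
  have : CompactSpace K := isCompact_iff_compactSpace.1 hK
  have hclosed (z : M) : IsClosed (((↑) : K → UnitAddCircle) '' (j ⁻¹' closedBall z ε)) :=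
    ((isClosed_closedBall.preimage hj).isCompact.image continuous_subtype_val).isClosed
  have hdisj : Disjoint (((↑) : K → UnitAddCircle) '' (j ⁻¹' closedBall x ε))
      ((↑) '' (j ⁻¹' closedBall y ε)) := by
    rw [disjoint_image_iff Subtype.val_injective]
    refine Set.disjoint_left.2 fun c hcx hcy => hxy.not_ge ?_
    calc dist x y ≤ dist (j c) x + dist (j c) y := dist_triangle_left _ _ _
      _ ≤ 2 * ε := by linarith [mem_closedBall.1 hcx, mem_closedBall.1 hcy]
  have hcover' : ∀ c ∈ K, CircBtw a c b →
      c ∈ ((↑) : K → UnitAddCircle) '' (j ⁻¹' closedBall x ε) ∪ (↑) '' (j ⁻¹' closedBall y ε) :=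
    fun c hc hacb => (hcover ⟨c, hc⟩ hacb).imp (⟨⟨c, hc⟩, ·, rfl⟩) (⟨⟨c, hc⟩, ·, rfl⟩)
  obtain ⟨_, ⟨a', ha', rfl⟩, _, ⟨b', hb', rfl⟩, hgap⟩ := exists_isArcGap_of_circBtw_subset
    (hclosed x) (hclosed y) hdisj (mem_image_of_mem _ ha) (mem_image_of_mem _ hb) hcover'
  exact ⟨a', b', hgap.isGap a'.2 b'.2, ha', hb'⟩

end UnitAddCircle

open UnitAddCircle

namespace WDS

variable {M : Type*} [MetricSpace M] {f : M → M} (W : WDS M f)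

lemma isCompact_range_j : IsCompact (range W.j) :=
  have : CompactSpace W.K := isCompact_iff_compactSpace.1 W.K_cpt
  isCompact_range W.j_emb.continuous

lemma range_j_nonempty : (range W.j).Nonempty :=
  let ⟨k, hk⟩ := W.K_ne
  ⟨_, mem_range_self ⟨k, hk⟩⟩

lemma mk_mem_orderGraph {a c b : W.K} (h : CircBtw a c b) :
    (W.j a, W.j c, W.j b) ∈ W.orderGraph :=
  ⟨a, c, b, h, rfl⟩

lemma mk_mem_revGraph {a c b : W.K} (h : CircBtw b c a) :
    (W.j a, W.j c, W.j b) ∈ W.revGraph :=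
  W.mk_mem_orderGraph h

lemma orderGraph_nonempty : W.orderGraph.Nonempty :=
  let ⟨k, hk⟩ := W.K_ne
  ⟨_, W.mk_mem_orderGraph (circBtw_self (⟨k, hk⟩ : W.K))⟩

lemma revGraph_nonempty : W.revGraph.Nonempty :=
  let ⟨k, hk⟩ := W.K_ne
  ⟨_, W.mk_mem_revGraph (circBtw_self (⟨k, hk⟩ : W.K))⟩

lemma isBounded_of_subset_range_prod {S : Set (M × M × M)}
    (hS : S ⊆ range W.j ×ˢ range W.j ×ˢ range W.j) : Bornology.IsBounded S :=
  (W.isCompact_range_j.isBounded.prod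
    (W.isCompact_range_j.isBounded.prod W.isCompact_range_j.isBounded)).subset hS

lemma isBounded_orderGraph : Bornology.IsBounded W.orderGraph :=
  W.isBounded_of_subset_range_prod <| by
    rintro _ ⟨a, c, b, -, rfl⟩
    exact ⟨mem_range_self a, mem_range_self c, mem_range_self b⟩

lemma isBounded_revGraph : Bornology.IsBounded W.revGraph :=
  W.isBounded_of_subset_range_prod <| by
    rintro ⟨x, y, z⟩ ⟨a, c, b, -, h⟩
    simp only [Prod.mk.injEq] at h
    obtain ⟨rfl, rfl, rfl⟩ := h
    exact ⟨mem_range_self b, mem_range_self c, mem_range_self a⟩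

lemma exists_circBtw_of_hausdorffDist_lt {S : Set (M × M × M)} (hSne : S.Nonempty)
    (hSb : Bornology.IsBounded S) {δ : ℝ} (hSG : hausdorffDist S W.orderGraph < δ) {x y z : M}
    (hxyz : (x, y, z) ∈ S) :
    ∃ a c b : W.K, CircBtw a c b ∧
      dist x (W.j a) < δ ∧ dist y (W.j c) < δ ∧ dist z (W.j b) < δ := by
  obtain ⟨_, ⟨a, c, b, hacb, rfl⟩, hd⟩ := exists_dist_lt_of_hausdorffDist_lt hxyz hSG
    (hausdorffEDist_ne_top_of_nonempty_of_bounded hSne W.orderGraph_nonempty hSb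
      W.isBounded_orderGraph)
  simp only [Prod.dist_eq, max_lt_iff] at hd
  exact ⟨a, c, b, hacb, hd.1, hd.2.1, hd.2.2⟩

lemma exists_dist_lt_of_hausdorffDist_range_lt (W₁ : WDS M f) {δ : ℝ}
    (h : hausdorffDist (range W₁.j) (range W.j) < δ) (p : W.K) :
    ∃ a : W₁.K, dist (W₁.j a) (W.j p) < δ := by
  obtain ⟨_, ⟨a, rfl⟩, ha⟩ := exists_dist_lt_of_hausdorffDist_lt' (mem_range_self p) h
    (hausdorffEDist_ne_top_of_nonempty_of_bounded W₁.range_j_nonempty W.range_j_nonempty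
      W₁.isCompact_range_j.isBounded W.isCompact_range_j.isBounded)
  exact ⟨a, ha⟩

end WDS

namespace UnitAddCircle

variable {M : Type*} [MetricSpace M] {f : M → M} {W : WDS M f} {p q : W.K}

lemma IsArcGap.exists_dist_lt_of_hausdorffDist_lt (hpq : IsArcGap W.K p q) {ε : ℝ} (hε : 0 < ε) :
    ∃ δ > 0, ∀ S : Set (M × M × M), S.Nonempty → Bornology.IsBounded S →
      hausdorffDist S W.orderGraph < δ → ∀ x y z : M, (x, y, z) ∈ S →
      dist x (W.j p) < δ → dist z (W.j q) < δ → dist y (W.j p) < ε ∨ dist y (W.j q) < ε := by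
  obtain ⟨δ₀, hδ₀, hmid⟩ := hpq.exists_dist_lt_of_circBtw W.j_emb (half_pos hε)
  refine ⟨min (δ₀ / 2) (ε / 2), by positivity, fun S hSne hSb hSG x y z hxyz hx hz => ?_⟩
  have hδ₀' := min_le_left (δ₀ / 2) (ε / 2)
  have hδε := min_le_right (δ₀ / 2) (ε / 2)
  obtain ⟨a, c, b, hacb, hxa, hyc, hzb⟩ := W.exists_circBtw_of_hausdorffDist_lt hSne hSb hSG hxyz
  refine (hmid a c b hacb ((dist_triangle_left _ _ x).trans_lt (by linarith))
    ((dist_triangle_left _ _ z).trans_lt (by linarith))).imp (fun h => ?_) (fun h => ?_)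
  · exact (dist_triangle _ (W.j c) _).trans_lt (by linarith)
  · exact (dist_triangle _ (W.j c) _).trans_lt (by linarith)

theorem IsArcGap.exists_isGap_dist_lt (hpq : IsArcGap W.K p q) {ε : ℝ} (hε : 0 < ε) :
    ∃ δ > 0, ∀ W₁ : WDS M f, hausdorffDist (range W₁.j) (range W.j) < δ →
      (hausdorffDist W₁.orderGraph W.orderGraph < δ ∨
        hausdorffDist W₁.revGraph W.orderGraph < δ) →
      ∃ a' b' : W₁.K, IsGap W₁.K a' b' ∧ dist (W₁.j a') (W.j p) < ε ∧
        dist (W₁.j b') (W.j q) < ε := by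
  have hdist : 0 < dist (W.j p) (W.j q) :=
    dist_pos.2 (W.j_emb.injective.ne fun h => hpq.ne (congrArg Subtype.val h))
  set ε' := min (ε / 2) (dist (W.j p) (W.j q) / 3)
  have hε' : 0 < ε' := lt_min (half_pos hε) (by linarith)
  have hε'ε : ε' < ε := (min_le_left _ _).trans_lt (half_lt_self hε)
  have hsep : 2 * ε' < dist (W.j p) (W.j q) := by
    linarith [min_le_right (ε / 2) (dist (W.j p) (W.j q) / 3)]
  obtain ⟨δ₀, hδ₀, hnear⟩ := hpq.exists_dist_lt_of_hausdorffDist_lt hε'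
  refine ⟨min δ₀ ε', lt_min hδ₀ hε', fun W₁ hrange hgraph => ?_⟩
  have hδ₀' : min δ₀ ε' ≤ δ₀ := min_le_left _ _
  have hδε : min δ₀ ε' ≤ ε' := min_le_right _ _
  obtain ⟨α, hα⟩ := W.exists_dist_lt_of_hausdorffDist_range_lt W₁ hrange p
  obtain ⟨β, hβ⟩ := W.exists_dist_lt_of_hausdorffDist_range_lt W₁ hrange q
  rcases hgraph with hG | hG
  · obtain ⟨a', b', hgap, ha', hb'⟩ := exists_isGap_dist_le W₁.K_cpt W₁.j_emb.continuous hsep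
      (hα.le.trans hδε) (hβ.le.trans hδε) fun c hαcβ =>
        (hnear _ W₁.orderGraph_nonempty W₁.isBounded_orderGraph (hG.trans_le hδ₀') _ _ _
          (W₁.mk_mem_orderGraph hαcβ) (hα.trans_le hδ₀') (hβ.trans_le hδ₀')).imp le_of_lt le_of_lt
    exact ⟨a', b', hgap, ha'.trans_lt hε'ε, hb'.trans_lt hε'ε⟩
  · obtain ⟨a', b', hgap, ha', hb'⟩ := exists_isGap_dist_le W₁.K_cpt W₁.j_emb.continuous
      (dist_comm (W.j p) _ ▸ hsep) (hβ.le.trans hδε) (hα.le.trans hδε) fun c hβcα =>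
        (hnear _ W₁.revGraph_nonempty W₁.isBounded_revGraph (hG.trans_le hδ₀') _ _ _
          (W₁.mk_mem_revGraph hβcα) (hα.trans_le hδ₀') (hβ.trans_le hδ₀')).symm.imp
          le_of_lt le_of_lt
    exact ⟨b', a', hgap.symm, hb'.trans_lt hε'ε, ha'.trans_lt hε'ε⟩

theorem IsGap.exists_isGap_dist_lt (hpq : IsGap W.K p q) {ε : ℝ} (hε : 0 < ε) :
    ∃ δ > 0, ∀ W₁ : WDS M f, hausdorffDist (range W₁.j) (range W.j) < δ →
      (hausdorffDist W₁.orderGraph W.orderGraph < δ ∨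
        hausdorffDist W₁.revGraph W.orderGraph < δ) →
      ∃ a' b' : W₁.K, IsGap W₁.K a' b' ∧ dist (W₁.j a') (W.j p) < ε ∧
        dist (W₁.j b') (W.j q) < ε := by
  rcases hpq.isArcGap_or_isArcGap W.K_cpt.isClosed p.2 q.2 with h | h
  · exact h.exists_isGap_dist_lt hε
  · obtain ⟨δ, hδ, hW⟩ := h.exists_isGap_dist_lt hε
    refine ⟨δ, hδ, fun W₁ hrange hgraph => ?_⟩
    obtain ⟨a', b', hgap, ha', hb'⟩ := hW W₁ hrange hgraph
    exact ⟨b', a', hgap.symm, hb', ha'⟩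

end UnitAddCircle

theorem gap_persists_general
    {M : Type*} [MetricSpace M] (f : M → M)
    (W : WDS M f) (a b : UnitAddCircle) (ha : a ∈ W.K) (hb : b ∈ W.K) (hab : a ≠ b)
    (I : Set UnitAddCircle) (hI : ∃ x ∈ W.Kᶜ, I = connectedComponentIn W.Kᶜ x)
    (hIab : frontier I = {a, b}) :
    ∀ ε > (0 : ℝ), ∃ δ > (0 : ℝ), ∀ W₁ : WDS M f,
      Metric.hausdorffDist (Set.range W₁.j) (Set.range W.j) < δ →
      (Metric.hausdorffDist W₁.orderGraph W.orderGraph < δ ∨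
        Metric.hausdorffDist W₁.revGraph W.orderGraph < δ) →
      ∃ (a' b' : W₁.K) (I' : Set UnitAddCircle),
        (∃ x ∈ W₁.Kᶜ, I' = connectedComponentIn W₁.Kᶜ x) ∧
        (a' : UnitAddCircle) ≠ (b' : UnitAddCircle) ∧
        frontier I' = {(a' : UnitAddCircle), (b' : UnitAddCircle)} ∧
        dist (W₁.j a') (W.j ⟨a, ha⟩) < ε ∧ dist (W₁.j b') (W.j ⟨b, hb⟩) < ε := by
  intro ε hε
  obtain ⟨δ, hδ, hW⟩ :=
    IsGap.exists_isGap_dist_lt (p := ⟨a, ha⟩) (q := ⟨b, hb⟩) ⟨I, hI, hab, hIab⟩ hε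
  refine ⟨δ, hδ, fun W₁ hrange hgraph => ?_⟩
  obtain ⟨a', b', ⟨I', hI', hne, hfr⟩, ha', hb'⟩ := hW W₁ hrange hgraph
  exact ⟨a', b', I', hI', hne, hfr, ha', hb'⟩

/-- Gaps of a weak Denjoy sub-system persist for nearby weak Denjoy sub-systems:
if `{j a, j b}` is a gap of `(K, j, h)`, then any WDS close enough to `(K, j, h)` in
the Hausdorff sense (for the images and the order graphs, up to reversal) has a gap
close to `{j a, j b}`. -/
theorem gap_persists
    {M : Type*} [MetricSpace M] (f : M → M) (hf : IsHomeomorph f)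
    (W : WDS M f) (a b : UnitAddCircle) (ha : a ∈ W.K) (hb : b ∈ W.K) (hab : a ≠ b)
    (I : Set UnitAddCircle) (hI : ∃ x ∈ W.Kᶜ, I = connectedComponentIn W.Kᶜ x)
    (hIab : frontier I = {a, b}) :
    ∀ ε > (0 : ℝ), ∃ δ > (0 : ℝ), ∀ W₁ : WDS M f,
      Metric.hausdorffDist (Set.range W₁.j) (Set.range W.j) < δ →
      (Metric.hausdorffDist W₁.orderGraph W.orderGraph < δ ∨
        Metric.hausdorffDist W₁.revGraph W.orderGraph < δ) →
      ∃ (a' b' : W₁.K) (I' : Set UnitAddCircle),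
        (∃ x ∈ W₁.Kᶜ, I' = connectedComponentIn W₁.Kᶜ x) ∧
        (a' : UnitAddCircle) ≠ (b' : UnitAddCircle) ∧
        frontier I' = {(a' : UnitAddCircle), (b' : UnitAddCircle)} ∧
        dist (W₁.j a') (W.j ⟨a, ha⟩) < ε ∧ dist (W₁.j b') (W.j ⟨b, hb⟩) < ε :=
  gap_persists_general f W a b ha hb hab I hI hIab
end
end

section
/- Let X be a compact metric space and f : X → X a homeomorphism that is expansive with constant ε > 0: for all x, y ∈ X, if dist(fⁿ(x), fⁿ(y)) < ε for all n ∈ ℤ, then x = y. Suppose X = C₁ ∪ … ∪ C_N where the C_i are pairwise disjoint, clopen in X, and each of diameter less than ε. Define the itinerary map H : X → (Fin N)^ℤ by H(x)(k) = i where fᵏ(x) ∈ C_i. Then H is continuous and injective, hence a homeomorphism onto its image, and H ∘ f = σ ∘ H, where σ is the shift on (Fin N)^ℤ (σ(u)(k) = u(k+1)) and (Fin N)^ℤ carries the product topology. -/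
/-!
A point is recovered from its itinerary by expansiveness: two points with the same itinerary lie,
at every time, in a common piece of diameter less than `ε`. Each coordinate of the itinerary is
continuous because its fibres are preimages of the open pieces under the continuous maps `fᵏ`, and
a continuous injection from a compact space into a Hausdorff space is an embedding. The
conjugacy `H ∘ f = σ ∘ H` is `fᵏ ∘ f = fᵏ⁺¹`.
-/

open Set

open Function

def shiftSeq {A : Type*} (u : ℤ → A) : ℤ → A := fun k => u (k + 1)

namespace Homeomorph

variable {X : Type*} [TopologicalSpace X]

def toPerm : (X ≃ₜ X) →* Equiv.Perm X where
  toFun f := f.toEquiv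
  map_one' := rfl
  map_mul' _ _ := rfl

theorem coe_toEquiv_zpow (f : X ≃ₜ X) (n : ℤ) : ⇑(f.toEquiv ^ n) = ⇑(f ^ n) := by
  change ⇑(toPerm f ^ n) = _
  rw [← map_zpow]
  rfl

theorem continuous_toEquiv_zpow (f : X ≃ₜ X) (n : ℤ) : Continuous ⇑(f.toEquiv ^ n) := by
  rw [coe_toEquiv_zpow]
  exact (f ^ n).continuous

end Homeomorph

section Itinerary

variable {X Y ι κ : Type*} {φ : κ → X → Y} {C : ι → Set Y} {H : X → κ → ι}

theorem itinerary_eq_of_mem (hdisj : Pairwise (Disjoint on C))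
    (hH : ∀ x k, φ k x ∈ C (H x k)) {x : X} {k : κ} {i : ι} (h : φ k x ∈ C i) : H x k = i := by
  by_contra hne
  exact Set.disjoint_left.mp (hdisj hne) (hH x k) h

theorem continuous_itinerary [TopologicalSpace X] [TopologicalSpace Y] [TopologicalSpace ι]
    [DiscreteTopology ι] (hφ : ∀ k, Continuous (φ k)) (hdisj : Pairwise (Disjoint on C))
    (hopen : ∀ i, IsOpen (C i)) (hH : ∀ x k, φ k x ∈ C (H x k)) : Continuous H := by
  refine continuous_pi fun k => continuous_discrete_rng.mpr fun i => ?_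
  have hfibre : (fun x => H x k) ⁻¹' {i} = φ k ⁻¹' C i := by
    ext x
    exact ⟨fun hx => (show H x k = i from hx) ▸ hH x k, itinerary_eq_of_mem hdisj hH⟩
  rw [hfibre]
  exact (hopen i).preimage (hφ k)

theorem itinerary_injective [PseudoMetricSpace Y] {ε : ℝ}
    (hsep : ∀ x x', (∀ k, dist (φ k x) (φ k x') < ε) → x = x')
    (hbdd : ∀ i, Bornology.IsBounded (C i)) (hdiam : ∀ i, Metric.diam (C i) < ε)
    (hH : ∀ x k, φ k x ∈ C (H x k)) : Function.Injective H := by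
  intro x x' hxx'
  refine hsep x x' fun k => ?_
  have hx : φ k x ∈ C (H x' k) := hxx' ▸ hH x k
  exact (Metric.dist_le_diam_of_mem (hbdd _) hx (hH x' k)).trans_lt (hdiam _)

theorem itinerary_apply_eq_shiftSeq {f : Equiv.Perm X} {C : ι → Set X} {H : X → ℤ → ι}
    (hdisj : Pairwise (Disjoint on C)) (hH : ∀ x k, (f ^ k) x ∈ C (H x k)) (x : X) :
    H (f x) = shiftSeq (H x) := by
  funext k
  refine itinerary_eq_of_mem (i := H x (k + 1)) hdisj hH ?_
  simpa only [zpow_add_one, Equiv.Perm.mul_apply] using hH x (k + 1)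

end Itinerary

theorem itinerary_embedding_general
    {X : Type*} [MetricSpace X] [CompactSpace X] (f : X ≃ₜ X)
    (ε : ℝ)
    (hexp : ∀ x y : X,
      (∀ n : ℤ, dist ((f.toEquiv ^ n) x) ((f.toEquiv ^ n) y) < ε) → x = y)
    (N : ℕ) (C : Fin N → Set X)
    (hdisj : ∀ i j : Fin N, i ≠ j → Disjoint (C i) (C j))
    (hclopen : ∀ i : Fin N, IsClopen (C i))
    (hdiam : ∀ i : Fin N, Metric.diam (C i) < ε)
    (H : X → (ℤ → Fin N))
    (hH : ∀ (x : X) (k : ℤ), (f.toEquiv ^ k) x ∈ C (H x k)) :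
    Continuous H ∧ Function.Injective H ∧ Topology.IsEmbedding H ∧
      ∀ x : X, H (f x) = shiftSeq (H x) := by
  have hpair : Pairwise (Disjoint on C) := fun i j => hdisj i j
  have hcont : Continuous H :=
    continuous_itinerary f.continuous_toEquiv_zpow hpair (fun i => (hclopen i).isOpen) hH
  have hinj : Function.Injective H :=
    itinerary_injective hexp (fun _ => Metric.isBounded_of_compactSpace) hdiam hH
  exact ⟨hcont, hinj, (hcont.isClosedEmbedding hinj).isEmbedding,
    itinerary_apply_eq_shiftSeq hpair hH⟩

/-- For an expansive homeomorphism of a compact metric space and a finite partition into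
clopen sets of diameter less than the expansivity constant, the itinerary map is a
continuous injective map (hence a homeomorphism onto its image) conjugating the
dynamics to the shift. -/
theorem itinerary_embedding
    {X : Type*} [MetricSpace X] [CompactSpace X] (f : X ≃ₜ X)
    (ε : ℝ) (hε : 0 < ε)
    (hexp : ∀ x y : X,
      (∀ n : ℤ, dist ((f.toEquiv ^ n) x) ((f.toEquiv ^ n) y) < ε) → x = y)
    (N : ℕ) (C : Fin N → Set X)
    (hdisj : ∀ i j : Fin N, i ≠ j → Disjoint (C i) (C j))
    (hclopen : ∀ i : Fin N, IsClopen (C i))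
    (hdiam : ∀ i : Fin N, Metric.diam (C i) < ε)
    (hcover : (⋃ i, C i) = Set.univ)
    (H : X → (ℤ → Fin N))
    (hH : ∀ (x : X) (k : ℤ), (f.toEquiv ^ k) x ∈ C (H x k)) :
    Continuous H ∧ Function.Injective H ∧ Topology.IsEmbedding H ∧
      ∀ x : X, H (f x) = shiftSeq (H x) :=
  itinerary_embedding_general f ε hexp N C hdisj hclopen hdiam H hH
end

section
/- Let p ≥ 1 and let A : Fin p × Fin p → {true, false} be an irreducible transition matrix (for all i, j ∈ Fin p there exist n ≥ 1 and a finite sequence i = u₀, u₁, …, u_n = j with A(u_m, u_{m+1}) = true for all m < n). Let Σ_A = {u : ℤ → Fin p | ∀ k ∈ ℤ, A(u(k), u(k+1)) = true} with the product topology and the shift σ_A(u)(k) = u(k+1), and assume Σ_A is infinite. Then there exist N ≥ 1 and a nonempty compact subset 𝒦₀ ⊆ Σ_A with σ_A^N(𝒦₀) = 𝒦₀ and a homeomorphism φ : Σ₂ → 𝒦₀ (onto 𝒦₀) such that σ_A^N ∘ φ = φ ∘ σ, i.e. the restriction of σ_A^N to 𝒦₀ is topologically conjugate to the full shift on two symbols.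 -/
open Set

/-- Irreducibility of a transition matrix: any symbol can be connected to any other
by an admissible word. -/
def MatIrreducible {p : ℕ} (A : Fin p → Fin p → Bool) : Prop :=
  ∀ i j : Fin p, ∃ n : ℕ, 1 ≤ n ∧ ∃ u : ℕ → Fin p, u 0 = i ∧ u n = j ∧
    ∀ m < n, A (u m) (u (m + 1)) = true

/-- The two-sided subshift of finite type associated to a transition matrix `A`. -/
def SubshiftSFT {p : ℕ} (A : Fin p → Fin p → Bool) : Set (ℤ → Fin p) :=
  {u | ∀ k : ℤ, A (u k) (u (k + 1)) = true}

/-!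
If every symbol had at most one successor, irreducibility would make the successor map a
permutation of the alphabet and every point of `Σ_A` would be determined by its `0`-th
coordinate, so `Σ_A` would be finite. Hence some symbol `a` has two successors `b₀ ≠ b₁`, and
irreducibility closes the edges `a → b₀` and `a → b₁` into cycles through `a`. Repeating each
cycle gives two admissible words of a common length `N`, starting and ending at `a` and differing
at position `1`; concatenating them as prescribed by `u ∈ Σ₂` is the required conjugacy.
-/

open Function

lemma shiftSeq_iterate_apply {α : Type*} (n : ℕ) (v : ℤ → α) (k : ℤ) :
    shiftSeq^[n] v k = v (k + n) := by
  induction n generalizing v k with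
  | zero => simp
  | succ n ih =>
    rw [iterate_succ_apply, ih]
    simp only [shiftSeq, Nat.cast_succ, add_assoc]

lemma shiftSeq_surjective {α : Type*} : Surjective (shiftSeq : (ℤ → α) → ℤ → α) :=
  fun v => ⟨fun k => v (k - 1), funext fun k => by simp [shiftSeq]⟩

lemma int_orbit_ext {α : Type*} {f : α → α} (hf : Injective f) {u v : ℤ → α}
    (hu : ∀ k, u (k + 1) = f (u k)) (hv : ∀ k, v (k + 1) = f (v k)) (h0 : u 0 = v 0) :
    u = v := by
  funext k
  induction k using Int.induction_on with
  | zero => exact h0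
  | succ k ih => rw [hu, hv, ih]
  | pred k ih => exact hf (by rw [← hu, ← hv, sub_add_cancel, ih])

section Successors

variable {p : ℕ} {A : Fin p → Fin p → Bool}

lemma finite_subshiftSFT_of_deterministic (hA : MatIrreducible A)
    (hdet : ∀ a b b', A a b = true → A a b' = true → b = b') :
    (SubshiftSFT A).Finite := by
  have hsucc : ∀ i, ∃ j, A i j = true := fun i => by
    obtain ⟨n, hn, u, hu0, -, hadm⟩ := hA i i
    exact ⟨u 1, hu0 ▸ hadm 0 hn⟩
  have hpred : ∀ j, ∃ i, A i j = true := fun j => by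
    obtain ⟨n, hn, u, -, hun, hadm⟩ := hA j j
    refine ⟨u (n - 1), ?_⟩
    simpa [Nat.sub_add_cancel hn, hun] using hadm (n - 1) (by omega)
  choose f hf using hsucc
  have hf_surj : Surjective f := fun j =>
    let ⟨i, hij⟩ := hpred j
    ⟨i, hdet i _ _ (hf i) hij⟩
  have hstep : ∀ u ∈ SubshiftSFT A, ∀ k, u (k + 1) = f (u k) :=
    fun u hu k => hdet _ _ _ (hu k) (hf _)
  refine Set.Finite.of_finite_image (f := fun u => u 0) (Set.toFinite _) fun u hu v hv h0 => ?_
  exact int_orbit_ext (Finite.injective_iff_surjective.2 hf_surj) (hstep u hu) (hstep v hv) h0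

lemma exists_two_successors (hA : MatIrreducible A) (hinf : (SubshiftSFT A).Infinite) :
    ∃ a b b', b ≠ b' ∧ A a b = true ∧ A a b' = true := by
  by_contra! h
  exact hinf <| finite_subshiftSFT_of_deterministic hA fun a b b' hb hb' =>
    by_contra fun hne => h a b b' hne hb hb'

end Successors

section ConcatBlocks

variable {α β : Type*} {N : ℕ} {W : α → ℕ → β}

/-- The bi-infinite concatenation of the words `W (u j)` of length `N`, the `j`-th word
occupying the positions `j * N, …, j * N + N - 1`. -/
def concatBlocks (N : ℕ) (W : α → ℕ → β) (u : ℤ → α) : ℤ → β :=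
  fun k => W (u (k / N)) (k % N).toNat

lemma concatBlocks_mul_add (u : ℤ → α) (j : ℤ) {m : ℕ} (hm : m < N) :
    concatBlocks N W u (j * N + m) = W (u j) m := by
  have hN : (N : ℤ) ≠ 0 := by omega
  have hmN : (m : ℤ) < N := by exact_mod_cast hm
  simp only [concatBlocks, add_comm (j * N), Int.add_mul_ediv_right _ _ hN,
    Int.ediv_eq_zero_of_lt (Int.natCast_nonneg m) hmN, zero_add, Int.add_mul_emod_self_right,
    Int.emod_eq_of_lt (Int.natCast_nonneg m) hmN, Int.toNat_natCast]

lemma exists_eq_mul_add (hN : 0 < N) (k : ℤ) : ∃ j : ℤ, ∃ m < N, k = j * N + m := by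
  have hN' : (0 : ℤ) < N := by exact_mod_cast hN
  refine ⟨k / N, (k % N).toNat, by have := Int.emod_lt_of_pos k hN'; omega, ?_⟩
  rw [Int.toNat_of_nonneg (Int.emod_nonneg k hN'.ne'), Int.ediv_mul_add_emod]

lemma concatBlocks_mem_subshiftSFT {p : ℕ} {A : Fin p → Fin p → Bool} {W : α → ℕ → Fin p}
    (hN : 0 < N) (hadm : ∀ i, ∀ m < N, A (W i m) (W i (m + 1)) = true)
    (hjoin : ∀ i i', W i N = W i' 0) (u : ℤ → α) :
    concatBlocks N W u ∈ SubshiftSFT A := by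
  intro k
  obtain ⟨j, m, hm, rfl⟩ := exists_eq_mul_add hN k
  rw [concatBlocks_mul_add u j hm]
  rcases (Nat.succ_le_of_lt hm).lt_or_eq with hlt | heq
  · rw [show j * N + m + 1 = j * N + (m + 1 : ℕ) by push_cast; ring,
      concatBlocks_mul_add u j hlt]
    exact hadm _ m hm
  · rw [show j * N + m + 1 = (j + 1) * N + (0 : ℕ) by rw [← heq]; push_cast; ring,
      concatBlocks_mul_add u _ hN, ← hjoin (u j), ← heq]
    exact hadm _ m hm

lemma shiftSeq_iterate_concatBlocks (hN : 0 < N) (u : ℤ → α) :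
    shiftSeq^[N] (concatBlocks N W u) = concatBlocks N W (shiftSeq u) := by
  funext k
  have hN' : (N : ℤ) ≠ 0 := by omega
  have hdiv : (k + N) / N = k / N + 1 := by
    simpa using Int.add_mul_ediv_right k 1 hN'
  simp only [shiftSeq_iterate_apply, concatBlocks, shiftSeq, hdiv, Int.add_emod_right]

lemma continuous_concatBlocks [TopologicalSpace α] [DiscreteTopology α] [TopologicalSpace β] :
    Continuous (concatBlocks N W) :=
  continuous_pi fun k =>
    (continuous_of_discreteTopology (f := fun a => W a (k % N).toNat)).comp (continuous_apply _)

lemma concatBlocks_injective {r : ℕ} (hr : r < N) (hW : Injective fun a => W a r) :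
    Injective (concatBlocks N W) := fun u v h => funext fun j => hW <| by
  simpa only [concatBlocks_mul_add _ j hr] using congrFun h (j * N + r)

end ConcatBlocks

lemma exists_isPeriodicPt_of_adj {p : ℕ} {A : Fin p → Fin p → Bool} (hA : MatIrreducible A)
    {a b : Fin p} (hab : A a b = true) :
    ∃ ℓ, 1 < ℓ ∧ ∃ x ∈ SubshiftSFT A, IsPeriodicPt shiftSeq ℓ x ∧ x 0 = a ∧ x 1 = b := by
  obtain ⟨n, hn, u, hu0, hun, hadm⟩ := hA b a
  let L : ℕ → Fin p := fun | 0 => a | m + 1 => u m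
  have hL : ∀ m < n + 1, A (L m) (L (m + 1)) = true
    | 0, _ => show A a (u 0) = true from hu0 ▸ hab
    | m + 1, hm => hadm m (by omega)
  have hpos : 0 < n + 1 := n.succ_pos
  refine ⟨n + 1, by omega, concatBlocks (n + 1) (fun _ : Unit => L) fun _ => (),
    concatBlocks_mem_subshiftSFT hpos (fun _ => hL) (fun _ _ => hun) _,
    shiftSeq_iterate_concatBlocks hpos _, ?_, ?_⟩
  · simpa using concatBlocks_mul_add (W := fun _ : Unit => L) (fun _ => ()) 0 hpos
  · simpa [L, hu0] using
      concatBlocks_mul_add (W := fun _ : Unit => L) (N := n + 1) (fun _ => ()) 0 (m := 1) (by omega)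

theorem sft_contains_full_two_shift_general
    (p : ℕ) (A : Fin p → Fin p → Bool)
    (hA : MatIrreducible A) (hinf : (SubshiftSFT A).Infinite) :
    ∃ N : ℕ, 1 ≤ N ∧ ∃ K₀ : Set (ℤ → Fin p),
      K₀.Nonempty ∧ IsCompact K₀ ∧ K₀ ⊆ SubshiftSFT A ∧
      shiftSeq^[N] '' K₀ = K₀ ∧
      ∃ φ : (ℤ → Fin 2) → (ℤ → Fin p),
        Topology.IsEmbedding φ ∧ Set.range φ = K₀ ∧
        ∀ u : ℤ → Fin 2, shiftSeq^[N] (φ u) = φ (shiftSeq u) := by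
  obtain ⟨a, b₀, b₁, hb, hab₀, hab₁⟩ := exists_two_successors hA hinf
  obtain ⟨ℓ₀, hℓ₀, x₀, hx₀, hper₀, hx₀0, hx₀1⟩ := exists_isPeriodicPt_of_adj hA hab₀
  obtain ⟨ℓ₁, hℓ₁, x₁, hx₁, hper₁, hx₁0, hx₁1⟩ := exists_isPeriodicPt_of_adj hA hab₁
  set N := ℓ₀ * ℓ₁
  have hN : 1 < N := Nat.lt_of_lt_of_le hℓ₀ (Nat.le_mul_of_pos_right _ (by omega))
  let x : Fin 2 → ℤ → Fin p := ![x₀, x₁]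
  have hx : ∀ i, x i ∈ SubshiftSFT A := Fin.forall_fin_two.2 ⟨hx₀, hx₁⟩
  have hx0 : ∀ i, x i 0 = a := Fin.forall_fin_two.2 ⟨hx₀0, hx₁0⟩
  have hxN : ∀ i, x i N = x i 0 := fun i => by
    have hper : IsPeriodicPt shiftSeq N (x i) := by
      fin_cases i
      exacts [hper₀.mul_const ℓ₁, hper₁.const_mul ℓ₀]
    simpa [shiftSeq_iterate_apply] using congrFun hper 0
  let φ := concatBlocks N fun i (m : ℕ) => x i m
  have hφ_cont : Continuous φ := continuous_concatBlocks
  have hx1 : (fun i => x i ((1 : ℕ) : ℤ)) = ![b₀, b₁] := by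
    ext i
    fin_cases i <;> simp [x, hx₀1, hx₁1]
  have hφ_inj : Injective φ := concatBlocks_injective hN (hx1 ▸ injective_pair_iff_ne.2 hb)
  have hφ_shift : ∀ u, shiftSeq^[N] (φ u) = φ (shiftSeq u) :=
    shiftSeq_iterate_concatBlocks (by omega)
  refine ⟨N, hN.le, range φ, range_nonempty φ, isCompact_range hφ_cont,
    range_subset_iff.2 <| concatBlocks_mem_subshiftSFT (by omega)
      (fun i m _ => by simpa using hx i m) (fun i i' => by simp only [hxN, Nat.cast_zero, hx0]),
    ?_, φ, (hφ_cont.isClosedEmbedding hφ_inj).isEmbedding, rfl, hφ_shift⟩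
  rw [← range_comp, show shiftSeq^[N] ∘ φ = φ ∘ shiftSeq from funext hφ_shift,
    shiftSeq_surjective.range_comp]

/-- An infinite transitive subshift of finite type contains, for some `N ≥ 1`, a compact
invariant set on which the `N`-th power of the shift is topologically conjugate to the
full shift on two symbols. -/
theorem sft_contains_full_two_shift
    (p : ℕ) (hp : 1 ≤ p) (A : Fin p → Fin p → Bool)
    (hA : MatIrreducible A) (hinf : (SubshiftSFT A).Infinite) :
    ∃ N : ℕ, 1 ≤ N ∧ ∃ K₀ : Set (ℤ → Fin p),
      K₀.Nonempty ∧ IsCompact K₀ ∧ K₀ ⊆ SubshiftSFT A ∧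
      shiftSeq^[N] '' K₀ = K₀ ∧
      ∃ φ : (ℤ → Fin 2) → (ℤ → Fin p),
        Topology.IsEmbedding φ ∧ Set.range φ = K₀ ∧
        ∀ u : ℤ → Fin 2, shiftSeq^[N] (φ u) = φ (shiftSeq u) :=
  sft_contains_full_two_shift_general p A hA hinf
end
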